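/- arXiv:1310.5346 — 4 statements merged into one kernel-verified Lean document; each statement's English description precedes it below -/
import Mathlib

section
/- Let p ≥ 5 be a prime number. Then for any positive integers n > m > k ≥ 1, the polynomial x^n + x^m + x^k + p is irreducible over ℚ. -/
/-!
If `|z| ≤ 1` then `|z^n + z^m + z^k| ≤ 3 < p`, so every complex root of
`f = X^n + X^m + X^k + p` lies outside the closed unit disc. In a factorisation `f = g h` into
monic integer polynomials, `g(0) h(0) = p` forces one of `g(0), h(0)` to be `±1`; but the constant
term of a nonconstant monic factor is, up to sign, the product of its roots, so its absolute value
exceeds `1`. Hence `f` is irreducible over `ℤ`, and over `ℚ` by Gauss's lemma.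
-/

open Polynomial

theorem Polynomial.Monic.one_lt_norm_coeff_zero_of_one_lt_norm_roots {K : Type*} [NormedField K]
    [IsAlgClosed K] {g : K[X]} (hg : g.Monic) (hdeg : 0 < g.natDegree)
    (hroots : ∀ z ∈ g.roots, 1 < ‖z‖) : 1 < ‖g.coeff 0‖ := by
  have hsplits := IsAlgClosed.splits g
  have hne : g.roots ≠ 0 := by
    rwa [← Multiset.card_pos, ← hsplits.natDegree_eq_card_roots]
  have hprod := Multiset.prod_map_lt_prod_map hne (fun _ ↦ (1 : ℝ)) (‖·‖) (fun _ _ ↦ one_pos)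
    hroots
  rw [Multiset.map_const', Multiset.prod_replicate, one_pow] at hprod
  rw [hsplits.coeff_zero_eq_prod_roots_of_monic hg, norm_mul, norm_pow, norm_neg, norm_one,
    one_pow, one_mul]
  exact hprod.trans_eq (map_multiset_prod (normHom : K →*₀ ℝ) g.roots).symm

theorem Polynomial.Monic.one_lt_abs_coeff_zero_of_one_lt_norm_aroots {g : ℤ[X]} (hg : g.Monic)
    (hdeg : 0 < g.natDegree) (hroots : ∀ z : ℂ, aeval z g = 0 → 1 < ‖z‖) :
    1 < |g.coeff 0| := by
  have h := (hg.map (algebraMap ℤ ℂ)).one_lt_norm_coeff_zero_of_one_lt_norm_roots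
    (by rwa [hg.natDegree_map]) fun z hz ↦ hroots z (mem_aroots.mp hz).2
  rwa [coeff_map, algebraMap_int_eq, eq_intCast, Complex.norm_intCast, ← Int.cast_abs,
    ← Int.cast_one, Int.cast_lt] at h

theorem Polynomial.Monic.irreducible_of_prime_coeff_zero_of_one_lt_norm_aroots {f : ℤ[X]}
    (hf : f.Monic) (hprime : Prime (f.coeff 0)) (hroots : ∀ z : ℂ, aeval z f = 0 → 1 < ‖z‖) :
    Irreducible f := by
  refine hf.irreducible_iff_natDegree.mpr ⟨by rintro rfl; simp at hprime, fun a b ha hb hab ↦ ?_⟩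
  have not_isUnit : ∀ g : ℤ[X], g.Monic → g ∣ f → 0 < g.natDegree → ¬IsUnit (g.coeff 0) := by
    rintro g hg ⟨h, rfl⟩ hdeg hunit
    have := hg.one_lt_abs_coeff_zero_of_one_lt_norm_aroots hdeg fun z hz ↦
      hroots z (by rw [map_mul, hz, zero_mul])
    rw [Int.isUnit_iff_abs_eq.mp hunit] at this
    exact this.false
  rcases hprime.irreducible.isUnit_or_isUnit (by rw [← hab, mul_coeff_zero]) with hu | hu
  · exact .inl (by_contra fun h ↦ not_isUnit a ha (hab ▸ dvd_mul_right a b) (by omega) hu)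
  · exact .inr (by_contra fun h ↦ not_isUnit b hb (hab ▸ dvd_mul_left b a) (by omega) hu)

theorem one_lt_norm_of_pow_add_pow_add_pow_add_eq_zero {K : Type*} [NormedField K] {z c : K}
    {n m k : ℕ} (hc : 3 < ‖c‖) (hz : z ^ n + z ^ m + z ^ k + c = 0) : 1 < ‖z‖ := by
  by_contra! hle
  have hpow : ∀ j : ℕ, ‖z ^ j‖ ≤ 1 := fun j ↦ by
    rw [norm_pow]; exact pow_le_one₀ (norm_nonneg z) hle
  have : ‖c‖ ≤ 3 := calc
    ‖c‖ = ‖z ^ n + z ^ m + z ^ k‖ := by rw [eq_neg_of_add_eq_zero_right hz, norm_neg]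
    _ ≤ ‖z ^ n‖ + ‖z ^ m‖ + ‖z ^ k‖ := norm_add₃_le
    _ ≤ 1 + 1 + 1 := by gcongr <;> exact hpow _
    _ = 3 := by norm_num
  linarith

theorem quadrinomial_prime_irreducible (p : ℕ) (hp : p.Prime) (hp5 : 5 ≤ p)
    (n m k : ℕ) (h1 : n > m) (h2 : m > k) (h3 : k ≥ 1) :
    Irreducible ((X : ℚ[X])^n + X^m + X^k + C (p : ℚ)) := by
  set f : ℤ[X] := X ^ n + X ^ m + X ^ k + C (p : ℤ)
  have hmonic : f.Monic := by
    rw [show f = X ^ n + (X ^ m + X ^ k + C (p : ℤ)) by ring]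
    refine monic_X_pow_add ((degree_le_of_natDegree_le (n := m) ?_).trans_lt ?_)
    · compute_degree
      omega
    · exact_mod_cast h1
  have hcoeff : f.coeff 0 = p := by
    simp [f, coeff_X_pow, show 0 ≠ n by omega, show 0 ≠ m by omega, show 0 ≠ k by omega]
  have hirr : Irreducible f := hmonic.irreducible_of_prime_coeff_zero_of_one_lt_norm_aroots
    (hcoeff ▸ Nat.prime_iff_prime_int.mp hp) fun z hz ↦
      one_lt_norm_of_pow_add_pow_add_pow_add_eq_zero (c := (p : ℂ))
        (by rw [Complex.norm_natCast]; norm_cast; omega) (by simpa [f] using hz)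
  simpa [f] using (IsPrimitive.Int.irreducible_iff_irreducible_map_cast hmonic.isPrimitive).mp hirr
end

section
/- For every rational u ≠ 0, the polynomial x^6 + x^4 + x^2 + a with a = -(u-1)^2(u+1)^2(u^2+3)^2/(64 u^2) factors as -h(x)·h(-x), where h(x) = x^3 + u x^2 + ((u^2+1)/2) x + (u-1)(u+1)(u^2+3)/(8u). In particular this sextic is a product of two cubics over ℚ. -/
open Polynomial

/-- Splitting `h = (X^3 + b X) + (u X^2 + c)` into odd and even parts, `-h(X) h(-X)` is the
difference of their squares. -/
theorem neg_mul_comp_neg_of_monic_cubic {R : Type*} [CommRing R] (u b c : R) :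
    -((X^3 + C u * X^2 + C b * X + C c) * (X^3 + C u * X^2 + C b * X + C c).comp (-X)) =
      (X : R[X])^6 + C (2 * b - u^2) * X^4 + C (b^2 - 2 * u * c) * X^2 - C (c^2) := by
  simp only [add_comp, mul_comp, pow_comp, X_comp, C_comp, map_sub, map_mul, map_pow,
    map_ofNat]
  ring

theorem sextic_two_cubics (u : ℚ) (hu : u ≠ 0) :
    (X : ℚ[X])^6 + X^4 + X^2 + C (-(u - 1)^2 * (u + 1)^2 * (u^2 + 3)^2 / (64 * u^2)) =
      -((X^3 + C u * X^2 + C ((u^2 + 1) / 2) * X + C ((u - 1) * (u + 1) * (u^2 + 3) / (8 * u))) *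
        ((X^3 + C u * X^2 + C ((u^2 + 1) / 2) * X +
          C ((u - 1) * (u + 1) * (u^2 + 3) / (8 * u))).comp (-X))) := by
  rw [neg_mul_comp_neg_of_monic_cubic]
  have quartic : 2 * ((u^2 + 1) / 2) - u^2 = 1 := by ring
  have quadratic :
      ((u^2 + 1) / 2)^2 - 2 * u * ((u - 1) * (u + 1) * (u^2 + 3) / (8 * u)) = 1 := by
    field_simp
    ring
  have constant : -((u - 1) * (u + 1) * (u^2 + 3) / (8 * u))^2 =
      -(u - 1)^2 * (u + 1)^2 * (u^2 + 3)^2 / (64 * u^2) := by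
    field_simp
    ring
  rw [quartic, quadratic, ← constant, map_neg, map_one, one_mul, one_mul, ← sub_eq_add_neg]
end

section
/- For any integers n > m ≥ 1, the identity x^{3n} + x^{3m} + x^{n+m} - 1/27 = (x^n + x^m - 1/3)(x^{2n} - x^{n+m} + x^{2m} + x^n/3 + x^m/3 + 1/9) holds in ℚ[x], and both factors are irreducible over ℚ. -/
/-!
The identity is `a³ + b³ + c³ - 3abc = (a + b + c)(a² + b² + c² - ab - bc - ca)` with
`a = xⁿ`, `b = xᵐ`, `c = -1/3`.

The linear factor is `-1/3` times the mirror of `Xⁿ - 3Xⁿ⁻ᵐ - 3`, which is Eisenstein at `3`.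

Over `K = ℚ(ζ)`, `ζ` a primitive cube root of unity, the quadratic factor `g` splits as
`9g = h(ζ) h(ζ²)` with `h(ζ) = 1 - 3ζ²Xᵐ - 3ζXⁿ`. The mirror of `h(ζ)` is
`Xⁿ - 3ζ²Xⁿ⁻ᵐ - 3ζ` over `𝓞 K`; with `λ = ζ - 1` we have `λ² = -3ζ`, so all its lower
coefficients are divisible by `λ²` and the constant term is exactly `λ²`. This is not enough for
Eisenstein, but it is enough for irreducibility because `-1` is not a square modulo `λ`
(`𝓞 K / λ = 𝔽₃`). Finally, a proper factor of `g` over `ℚ` would map to an associate of `h(ζ)`,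
forcing `-3ζ ∈ ℚ`.
-/

open Polynomial NumberField

namespace Polynomial

section Mirror

variable {R : Type*} [Semiring R] [NoZeroDivisors R]

noncomputable def mirrorMulEquiv : R[X] ≃* R[X] where
  toFun := mirror
  invFun := mirror
  left_inv := mirror_mirror
  right_inv := mirror_mirror
  map_mul' p q := mirror_mul_of_domain p q

theorem irreducible_mirror_iff {p : R[X]} : Irreducible p.mirror ↔ Irreducible p :=
  MulEquiv.irreducible_iff mirrorMulEquiv (x := p)

end Mirror

theorem map_trinomial {R S : Type*} [Semiring R] [Semiring S] (φ : R →+* S) (k m n : ℕ)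
    (u v w : R) : (trinomial k m n u v w).map φ = trinomial k m n (φ u) (φ v) (φ w) := by
  simp [trinomial_def]

theorem irreducible_mirror_trinomial_map {R K : Type*} [CommRing R] [IsDomain R]
    [IsIntegrallyClosed R] [Field K] [Algebra R K] [IsFractionRing R K] {m n : ℕ} (hm : 0 < m)
    (hmn : m < n) {a b : R} (ha : a ≠ 0) (h : Irreducible (trinomial 0 (n - m) n a b 1)) :
    Irreducible (trinomial 0 m n 1 (algebraMap R K b) (algebraMap R K a)) := by
  have hK := ((trinomial_monic (by omega) (by omega)).irreducible_iff_irreducible_map_fraction_map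
    (K := K)).1 h
  have ha' : algebraMap R K a ≠ 0 := (map_ne_zero_iff _ (IsFractionRing.injective R K)).2 ha
  rwa [map_trinomial, map_one, ← irreducible_mirror_iff,
    trinomial_mirror (by omega) (by omega) ha' one_ne_zero, Nat.sub_sub_self hmn.le,
    add_zero] at hK

section SquareEisenstein

variable {R : Type*} [CommRing R]

theorem Monic.eq_X_pow_of_mul_eq_X_pow [IsDomain R] {P Q : R[X]} {n : ℕ} (hP : P.Monic)
    (h : P * Q = X ^ n) : P = X ^ P.natDegree := by
  obtain ⟨i, -, hi⟩ := (dvd_prime_pow prime_X n).1 ⟨Q, h.symm⟩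
  rw [eq_of_monic_of_associated hP (monic_X_pow i) hi, natDegree_X_pow]

theorem Monic.exists_eq_X_pow_add_C_mul {π : R} (hπ : Prime π) {P Q : R[X]} (hP : P.Monic)
    (hQ : Q.Monic) (h : ∀ i < (P * Q).natDegree, π ∣ (P * Q).coeff i) :
    ∃ P', P = X ^ P.natDegree + C π * P' := by
  set I := Ideal.span {π}
  have : I.IsPrime := (Ideal.span_singleton_prime hπ.ne_zero).2 hπ
  set φ := Ideal.Quotient.mk I
  have hmod (p : R[X]) : p.map φ = 0 ↔ C π ∣ p := by
    simp [Polynomial.ext_iff, C_dvd_iff_dvd_coeff, φ, Ideal.Quotient.eq_zero_iff_mem, I,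
      Ideal.mem_span_singleton]
  have hPQ : P.map φ * Q.map φ = X ^ (P * Q).natDegree := by
    rw [← Polynomial.map_mul, ← sub_eq_zero, ← map_X φ, ← Polynomial.map_pow,
      ← Polynomial.map_sub, hmod, C_dvd_iff_dvd_coeff]
    intro i
    rcases lt_trichotomy i (P * Q).natDegree with hi | rfl | hi
    · simpa [coeff_X_pow, hi.ne] using h i hi
    · simp [(hP.mul hQ).coeff_natDegree]
    · simp [coeff_X_pow, hi.ne', coeff_eq_zero_of_natDegree_lt hi]
  have hPφ := (hP.map φ).eq_X_pow_of_mul_eq_X_pow hPQ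
  rw [hP.natDegree_map] at hPφ
  have hdiff : (P - X ^ P.natDegree).map φ = 0 := by
    rw [Polynomial.map_sub, hPφ, Polynomial.map_pow, map_X, sub_self]
  obtain ⟨P', hP'⟩ := (hmod _).1 hdiff
  exact ⟨P', by rw [← hP', add_sub_cancel]⟩

/- Modulo `π` a monic factorization `f = P * Q` is `X ^ a * X ^ b`, so `P = X ^ a + π P'` and
`Q = X ^ b + π Q'`. For `a ≤ b`, the coefficients of `X ^ a` and `X ^ 0` modulo `π ^ 2` give
`π ∣ Q'(0) + [a = b] P'(0)` and `u = P'(0) Q'(0)`, so `π ∣ u` or `π ∣ u + P'(0) ^ 2`. -/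
theorem Monic.irreducible_of_sq_dvd_coeff [IsDomain R] {π u : R} (hπ : Prime π) {f : R[X]}
    (hf : f.Monic) (hcoeff : ∀ i < f.natDegree, π ^ 2 ∣ f.coeff i) (hf0 : f.coeff 0 = π ^ 2 * u)
    (hu : ∀ s, ¬ π ∣ u + s ^ 2) : Irreducible f := by
  refine hf.irreducible_iff_natDegree.2 ⟨fun h1 => hπ.not_isUnit ?_, fun P Q hP hQ hPQ => ?_⟩
  · rw [h1, coeff_one_zero] at hf0
    exact isUnit_of_dvd_one ⟨π * u, by rw [hf0]; ring⟩
  by_contra! hdeg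
  wlog hab : P.natDegree ≤ Q.natDegree generalizing P Q
  · exact this Q P hQ hP (by rw [mul_comm, hPQ]) hdeg.symm (le_of_not_ge hab)
  obtain ⟨ha, hb⟩ := hdeg
  set a := P.natDegree
  set b := Q.natDegree
  have hdvd : ∀ i < (P * Q).natDegree, π ∣ (P * Q).coeff i := fun i hi =>
    (dvd_pow_self π two_ne_zero).trans (hPQ ▸ hcoeff i (hPQ ▸ hi))
  obtain ⟨P', hP'⟩ := hP.exists_eq_X_pow_add_C_mul hπ hQ hdvd
  obtain ⟨Q', hQ'⟩ := hQ.exists_eq_X_pow_add_C_mul hπ hP (by rwa [mul_comm])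
  have hf_eq : f = X ^ (a + b) + C π * (X ^ a * Q' + X ^ b * P') + C (π ^ 2) * (P' * Q') := by
    rw [← hPQ, hP', hQ', pow_add, C_pow]; ring
  have hu_eq : u = P'.coeff 0 * Q'.coeff 0 := by
    apply mul_left_cancel₀ (pow_ne_zero 2 hπ.ne_zero)
    rw [← hf0, hf_eq]
    simp [mul_coeff_zero, coeff_X_pow, ha.symm, hb.symm, (by omega : a + b ≠ 0).symm, pow_two]
  have hcoeff_a : π ∣ (X ^ a * Q' + X ^ b * P').coeff a := by
    have h := hcoeff a (by rw [← hPQ, hP.natDegree_mul hQ]; omega)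
    rwa [hf_eq, coeff_add, coeff_C_mul, coeff_add, coeff_C_mul, coeff_X_pow, if_neg (by omega),
      zero_add, pow_two, dvd_add_left (dvd_mul_right _ _), mul_dvd_mul_iff_left hπ.ne_zero] at h
  rcases hab.lt_or_eq with hlt | heq
  · simp only [coeff_add, coeff_X_pow_mul', le_refl, if_true, if_neg hlt.not_ge, Nat.sub_self,
      add_zero] at hcoeff_a
    exact hu 0 (by simpa [hu_eq] using hcoeff_a.mul_left (P'.coeff 0))
  · simp only [coeff_add, coeff_X_pow_mul', ← heq, le_refl, if_true, Nat.sub_self] at hcoeff_a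
    obtain ⟨c, hc⟩ := hcoeff_a
    exact hu (P'.coeff 0) ⟨P'.coeff 0 * c, by rw [hu_eq]; linear_combination P'.coeff 0 * hc⟩

end SquareEisenstein

section Descent

variable {k K : Type*} [Field k] [Field K] (φ : k →+* K)

theorem exists_map_eq_coeff_div_of_associated {p : k[X]} {h : K[X]}
    (hph : Associated (p.map φ) h) (i j : ℕ) : ∃ r, φ r = h.coeff i / h.coeff j := by
  obtain ⟨u, rfl⟩ := hph
  obtain ⟨c, hc, hcu⟩ := Polynomial.isUnit_iff.1 u.isUnit
  rw [← hcu, coeff_mul_C, coeff_mul_C, coeff_map, coeff_map, mul_div_mul_right _ _ hc.ne_zero,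
    ← map_div₀]
  exact ⟨_, rfl⟩

theorem irreducible_of_associated_map_mul {g : k[X]} {h₁ h₂ : K[X]} (h₁_irr : Irreducible h₁)
    (h₂_irr : Irreducible h₂) (hg : Associated (g.map φ) (h₁ * h₂))
    (hh₁ : ∀ p : k[X], ¬ Associated (p.map φ) h₁) : Irreducible g := by
  have key (p q : k[X]) (hq : ¬ IsUnit q) (hp : h₁ ∣ p.map φ)
      (hpq : Associated ((p * q).map φ) (h₁ * h₂)) : False := by
    obtain ⟨r, hr⟩ := hp
    rw [Polynomial.map_mul, hr, mul_assoc] at hpq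
    have hr_unit : IsUnit r :=
      (((hpq.of_mul_left (.refl h₁) h₁_irr.ne_zero).irreducible_iff.2 h₂_irr).isUnit_or_isUnit
        rfl).resolve_right (by rwa [isUnit_map])
    exact hh₁ p (hr ▸ associated_mul_unit_left h₁ r hr_unit)
  refine ⟨fun hu => h₁_irr.not_isUnit ?_, fun p q hpq => ?_⟩
  · exact isUnit_of_mul_isUnit_left (hg.isUnit_iff.1 ((isUnit_map φ).2 hu))
  by_contra! hpq_units
  subst hpq
  rcases h₁_irr.prime.dvd_or_dvd
      ((dvd_mul_right h₁ h₂).trans (hg.symm.dvd.trans (Polynomial.map_mul φ).dvd)) with hp | hq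
  · exact key p q hpq_units.2 hp hg
  · exact key q p hpq_units.1 hq (by rwa [mul_comm])

end Descent

end Polynomial

namespace IsPrimitiveRoot

theorem sq_add_self_add_one {R : Type*} [CommRing R] [IsDomain R] {ζ : R}
    (hζ : IsPrimitiveRoot ζ 3) : ζ ^ 2 + ζ + 1 = 0 := by
  simpa [Finset.sum_range_succ, add_comm, add_left_comm, add_assoc] using
    hζ.geom_sum_eq_zero (by norm_num)

variable {K : Type*} [Field K] {ζ : K} (hζ : IsPrimitiveRoot ζ 3)
include hζ

theorem algebraMap_rat_ne [CharZero K] (r : ℚ) : algebraMap ℚ K r ≠ ζ := by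
  rintro rfl
  have hr : IsPrimitiveRoot r 3 := hζ.of_map_of_injective (algebraMap ℚ K).injective
  exact hr.ne_one (by norm_num)
    ((Odd.pow_inj (n := 3) (by decide)).1 (by rw [hr.pow_eq_one, one_pow]))

theorem C_nine_mul_map_eq_trinomial_mul [CharZero K] (m n : ℕ) :
    C 9 * ((X : ℚ[X]) ^ (2 * n) - X ^ (n + m) + X ^ (2 * m) + C (1 / 3) * X ^ n +
      C (1 / 3) * X ^ m + C (1 / 9)).map (algebraMap ℚ K) =
      trinomial 0 m n 1 (-3 * ζ ^ 2) (-3 * ζ) * trinomial 0 m n 1 (-3 * ζ) (-3 * ζ ^ 2) := by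
  have hz : C ζ ^ 2 + C ζ + 1 = 0 := by
    rw [← C_pow, ← C_1, ← C_add, ← C_add, hζ.sq_add_self_add_one, C_0]
  have h3 : (3 : K[X]) * C (algebraMap ℚ K (1 / 3)) = 1 := by
    rw [← map_ofNat C 3, ← C_mul]; simp
  have h9 : (9 : K[X]) * C (algebraMap ℚ K (1 / 9)) = 1 := by
    rw [← map_ofNat C 9, ← C_mul]; simp
  simp only [Polynomial.map_add, Polynomial.map_sub, Polynomial.map_mul, Polynomial.map_pow,
    map_X, map_C, trinomial_def, map_one, map_mul, map_neg, map_pow, map_ofNat, pow_zero, mul_one]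
  linear_combination (3 * (X ^ m + X ^ n) - 9 * (C ζ - 1) * ((X ^ m) ^ 2 + (X ^ n) ^ 2)
    - 9 * (C ζ ^ 2 - C ζ + 1) * X ^ m * X ^ n) * hz + 3 * (X ^ m + X ^ n) * h3 + h9

theorem toInteger_sub_one_sq : (hζ.toInteger - 1) ^ 2 = -3 * hζ.toInteger := by
  linear_combination hζ.toInteger_isPrimitiveRoot.sq_add_self_add_one

variable [NumberField K] [IsCyclotomicExtension {3} ℚ K]

theorem toInteger_sub_one_not_dvd_one_add_sq (s : 𝓞 K) : ¬ hζ.toInteger - 1 ∣ 1 + s ^ 2 := by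
  have h2 : ¬ hζ.toInteger - 1 ∣ 2 := fun h =>
    IsCyclotomicExtension.Rat.two_not_mem_span_zeta_sub_one' 3 hζ (by norm_num)
      (Ideal.mem_span_singleton.2 h)
  intro h
  rcases IsCyclotomicExtension.Rat.Three.lambda_dvd_or_dvd_sub_one_or_dvd_add_one hζ s with
    hs | hs | hs
  · refine hζ.zeta_sub_one_prime'.not_isUnit (isUnit_of_dvd_one ?_)
    have := dvd_sub h (dvd_mul_of_dvd_left hs s)
    rwa [show 1 + s ^ 2 - s * s = 1 by ring] at this
  · refine h2 ?_
    have := dvd_sub h (dvd_mul_of_dvd_left hs (s + 1))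
    rwa [show 1 + s ^ 2 - (s - 1) * (s + 1) = 2 by ring] at this
  · refine h2 ?_
    have := dvd_sub h (dvd_mul_of_dvd_left hs (s - 1))
    rwa [show 1 + s ^ 2 - (s + 1) * (s - 1) = 2 by ring] at this

theorem irreducible_trinomial_toInteger {k n : ℕ} (hk : 0 < k) (hkn : k < n) :
    Irreducible (trinomial 0 k n (-3 * hζ.toInteger) (-3 * hζ.toInteger ^ 2) 1) := by
  have hsq := hζ.toInteger_sub_one_sq
  refine (trinomial_monic hk hkn).irreducible_of_sq_dvd_coeff hζ.zeta_sub_one_prime' (u := 1)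
    ?_ ?_ hζ.toInteger_sub_one_not_dvd_one_add_sq
  · rw [trinomial_natDegree hk hkn one_ne_zero]
    intro i hi
    simp only [trinomial_def, coeff_add, coeff_C_mul, coeff_X_pow, if_neg hi.ne, mul_zero,
      add_zero]
    split_ifs <;> simp [hsq, pow_two hζ.toInteger, ← mul_assoc]
  · rw [trinomial_trailing_coeff' hk hkn, hsq, mul_one]

theorem irreducible_trinomial {m n : ℕ} (hm : 0 < m) (hmn : m < n) :
    Irreducible (trinomial 0 m n (1 : K) (-3 * ζ ^ 2) (-3 * ζ)) := by
  have h3 : -3 * hζ.toInteger ≠ 0 :=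
    mul_ne_zero (by norm_num) (hζ.toInteger_isPrimitiveRoot.ne_zero (by norm_num))
  have hζ' : algebraMap (𝓞 K) K hζ.toInteger = ζ := rfl
  simpa [hζ', map_ofNat (algebraMap (𝓞 K) K) 3] using irreducible_mirror_trinomial_map (K := K)
    hm hmn h3 (hζ.irreducible_trinomial_toInteger (by omega) (by omega))

end IsPrimitiveRoot

theorem irreducible_X_pow_add_X_pow_sub_C {m n : ℕ} (hm : 0 < m) (hmn : m < n) :
    Irreducible ((X : ℚ[X]) ^ n + X ^ m - C (1 / 3)) := by
  have hmon : (trinomial 0 (n - m) n (-3 : ℤ) (-3) 1).Monic := trinomial_monic (by omega) (by omega)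
  have heis : (trinomial 0 (n - m) n (-3 : ℤ) (-3) 1).IsEisensteinAt (Ideal.span {3}) := by
    refine hmon.isEisensteinAt_of_mem_of_notMem ?_ (fun hi => ?_) ?_
    · rw [Ne, Ideal.span_singleton_eq_top, Int.isUnit_iff]; norm_num
    · rw [trinomial_natDegree (by omega) (by omega) one_ne_zero] at hi
      simp only [trinomial_def, coeff_add, coeff_C_mul, coeff_X_pow, if_neg hi.ne, mul_zero,
        add_zero, Ideal.mem_span_singleton]
      split_ifs <;> norm_num
    · rw [trinomial_trailing_coeff' (by omega) (by omega), Ideal.span_singleton_pow,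
        Ideal.mem_span_singleton]
      norm_num
  have h := irreducible_mirror_trinomial_map (K := ℚ) hm hmn (by norm_num) (heis.irreducible
    ((Ideal.span_singleton_prime (by norm_num)).2 Int.prime_three) hmon.isPrimitive
    (by rw [trinomial_natDegree (by omega) (by omega) one_ne_zero]; omega))
  rw [← irreducible_isUnit_mul (isUnit_C.2 (by norm_num : (-1 / 3 : ℚ) ≠ 0).isUnit)] at h
  have h3 : C (3⁻¹ : ℚ) * C 3 = 1 := by rw [← C_mul]; norm_num
  convert h using 1
  simp only [trinomial_def, eq_intCast, Int.cast_neg, Int.cast_ofNat, pow_zero, mul_one, C_1,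
    one_div, show (-1 / 3 : ℚ) = -3⁻¹ by norm_num, C_neg]
  linear_combination -(X ^ m + X ^ n) * h3

theorem irreducible_quadratic_factor {m n : ℕ} (hm : 0 < m) (hmn : m < n) :
    Irreducible ((X : ℚ[X]) ^ (2 * n) - X ^ (n + m) + X ^ (2 * m) +
      C (1 / 3) * X ^ n + C (1 / 3) * X ^ m + C (1 / 9)) := by
  have : IsCyclotomicExtension {3} ℚ (CyclotomicField 3 ℚ) :=
    CyclotomicField.isCyclotomicExtension 3 ℚ
  have : NumberField (CyclotomicField 3 ℚ) := IsCyclotomicExtension.numberField {3} ℚ _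
  have hζ := IsCyclotomicExtension.zeta_spec 3 ℚ (CyclotomicField 3 ℚ)
  set ζ := IsCyclotomicExtension.zeta 3 ℚ (CyclotomicField 3 ℚ)
  have h₂ := (hζ.pow_of_coprime 2 (by norm_num)).irreducible_trinomial hm hmn
  rw [← pow_mul, show ζ ^ (2 * 2) = ζ by rw [pow_succ, hζ.pow_eq_one, one_mul]] at h₂
  refine irreducible_of_associated_map_mul (algebraMap ℚ _) (hζ.irreducible_trinomial hm hmn) h₂
    ?_ fun p hp => ?_
  · rw [← hζ.C_nine_mul_map_eq_trinomial_mul]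
    exact (associated_unit_mul_left _ _ (isUnit_C.2 (by norm_num))).symm
  · obtain ⟨r, hr⟩ := exists_map_eq_coeff_div_of_associated _ hp n 0
    rw [trinomial_leading_coeff' hm hmn, trinomial_trailing_coeff' hm hmn, div_one] at hr
    exact hζ.algebraMap_rat_ne (-r / 3) (by rw [map_div₀, map_neg, hr, map_ofNat]; ring)

theorem cube_identity_factorization (n m : ℕ) (h1 : n > m) (h2 : m ≥ 1) :
    ((X : ℚ[X])^(3*n) + X^(3*m) + X^(n+m) - C (1/27) =
      (X^n + X^m - C (1/3)) *
      (X^(2*n) - X^(n+m) + X^(2*m) + C (1/3) * X^n + C (1/3) * X^m + C (1/9))) ∧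
    Irreducible ((X : ℚ[X])^n + X^m - C (1/3)) ∧
    Irreducible ((X : ℚ[X])^(2*n) - X^(n+m) + X^(2*m) +
      C (1/3) * X^n + C (1/3) * X^m + C (1/9)) := by
  refine ⟨?_, irreducible_X_pow_add_X_pow_sub_C h2 h1, irreducible_quadratic_factor h2 h1⟩
  have h3 : (3 : ℚ[X]) * C (1 / 3) = 1 := by rw [← map_ofNat C 3, ← C_mul]; norm_num
  rw [show (1 / 27 : ℚ) = (1 / 3) ^ 3 by norm_num, show (1 / 9 : ℚ) = (1 / 3) ^ 2 by norm_num,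
    C_pow, C_pow]
  linear_combination -(X ^ n * X ^ m) * h3
end

section
/- There is no nonzero rational a and integers n > m > k ≥ 1 such that the polynomial x^n + x^m + x^k + a has a complex root of multiplicity at least 3. -/
/-!
At a triple root `z` the Euler operator `θ = X · d/dX` gives `∑ j z^j = ∑ j² z^j = 0` over
`j ∈ {n, m, k}`, and `z ≠ 0` since `a ≠ 0`. Eliminating, with `A = n - m` and `B = m - k`,
both `z^A` and `z^B` are negative rationals and `A² z^(A+B) + (A+B)² z^A + B² = 0`.
By Bézout `w = z^gcd(A, B)` is rational, and negativity forces `a = A / gcd` and `b = B / gcd`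
to be odd, so `a² w^(a+b) + (a+b)² w^a + b² = 0`. Writing `w = p / q` in lowest terms and
reducing modulo 4 leaves `p^(a+b) + q^(a+b) ≡ 0`, impossible since `a + b` is even and
`p`, `q` are not both even.
-/

open Polynomial

namespace Polynomial

variable {R : Type*} [CommRing R]

variable (R) in
noncomputable def eulerOperator : R[X] →ₗ[R] R[X] := LinearMap.mulLeft R X ∘ₗ derivative

theorem eulerOperator_apply (p : R[X]) : eulerOperator R p = X * derivative p := rfl

theorem eulerOperator_X_pow (j : ℕ) : eulerOperator R (X ^ j) = j • X ^ j := by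
  cases j with
  | zero => simp [eulerOperator_apply]
  | succ j =>
    rw [eulerOperator_apply, derivative_X_pow, Nat.add_sub_cancel, nsmul_eq_mul, ← C_eq_natCast,
      pow_succ]
    ring

theorem eulerOperator_C (a : R) : eulerOperator R (C a) = 0 := by
  rw [eulerOperator_apply, derivative_C, mul_zero]

theorem pow_sub_dvd_iterate_eulerOperator_of_pow_dvd {p q : R[X]} {n : ℕ} (i : ℕ)
    (dvd : q ^ n ∣ p) : q ^ (n - i) ∣ (eulerOperator R)^[i] p := by
  induction i with
  | zero => simpa
  | succ i ih =>
    rw [Nat.sub_succ, Function.iterate_succ_apply']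
    exact (pow_sub_one_dvd_derivative_of_pow_dvd ih).mul_left X

theorem isRoot_iterate_eulerOperator_of_lt_rootMultiplicity {p : R[X]} {t : R} {i : ℕ}
    (hi : i < p.rootMultiplicity t) : ((eulerOperator R)^[i] p).IsRoot t :=
  dvd_iff_isRoot.mp <| (dvd_pow_self _ <| Nat.sub_ne_zero_of_lt hi).trans
    (pow_sub_dvd_iterate_eulerOperator_of_pow_dvd _ <| p.pow_rootMultiplicity_dvd t)

end Polynomial

theorem power_sums_eq_zero_of_two_lt_rootMultiplicity {R : Type*} [CommRing R] {n m k : ℕ}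
    {c z : R} (h : 2 < rootMultiplicity z (X ^ n + X ^ m + X ^ k + C c)) :
    z ^ n + z ^ m + z ^ k + c = 0 ∧ n * z ^ n + m * z ^ m + k * z ^ k = 0 ∧
      n ^ 2 * z ^ n + m ^ 2 * z ^ m + k ^ 2 * z ^ k = 0 := by
  have h0 := isRoot_iterate_eulerOperator_of_lt_rootMultiplicity (i := 0) (h.trans' two_pos)
  have h1 := isRoot_iterate_eulerOperator_of_lt_rootMultiplicity (i := 1) (h.trans' one_lt_two)
  have h2 := isRoot_iterate_eulerOperator_of_lt_rootMultiplicity (i := 2) h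
  simp only [Function.iterate_succ_apply', Function.iterate_zero_apply, map_add, map_nsmul,
    eulerOperator_X_pow, eulerOperator_C, add_zero] at h0 h1 h2
  simp only [IsRoot.def, eval_add, eval_pow, eval_X, eval_C, nsmul_eq_mul, eval_mul,
    eval_natCast] at h0 h1 h2
  exact ⟨h0, h1, by linear_combination h2⟩

theorem mul_sub_mul_pow_add_mul_sub_eq_zero {R : Type*} [CommRing R] [NoZeroDivisors R]
    {x y t z : R} (hz : z ≠ 0) {i j l : ℕ}
    (h1 : x * z ^ (j + i) + y * z ^ j + t * z ^ l = 0)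
    (h2 : x ^ 2 * z ^ (j + i) + y ^ 2 * z ^ j + t ^ 2 * z ^ l = 0) :
    x * (x - t) * z ^ i + y * (y - t) = 0 := by
  have h : (x * (x - t) * z ^ i + y * (y - t)) * z ^ j = 0 := by
    linear_combination h2 - t * h1
  exact (mul_eq_zero.1 h).resolve_right (pow_ne_zero j hz)

theorem natCast_sq_zmod_four_eq_one_of_odd {a : ℕ} (ha : Odd a) : (a : ZMod 4) ^ 2 = 1 := by
  obtain ⟨i, rfl⟩ := ha
  have h4 : (4 : ZMod 4) = 0 := rfl
  push_cast
  linear_combination ((i : ZMod 4) ^ 2 + i) * h4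

theorem natCast_sq_zmod_four_eq_zero_of_even {a : ℕ} (ha : Even a) : (a : ZMod 4) ^ 2 = 0 := by
  obtain ⟨i, rfl⟩ := ha
  have h4 : (4 : ZMod 4) = 0 := rfl
  push_cast
  linear_combination (i : ZMod 4) ^ 2 * h4

theorem Int.two_dvd_of_cast_sq_zmod_four_eq_zero {x : ℤ} (hx : (x : ZMod 4) ^ 2 = 0) : 2 ∣ x := by
  have h4 : ((4 : ℕ) : ℤ) ∣ x ^ 2 := by
    rw [← ZMod.intCast_zmod_eq_zero_iff_dvd]
    push_cast
    exact hx
  exact Int.prime_two.dvd_of_dvd_pow (dvd_trans (by norm_num) h4)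

theorem Int.sq_mul_pow_add_sq_mul_pow_mul_pow_add_sq_mul_pow_ne_zero {a b : ℕ} (ha : Odd a)
    (hb : Odd b) {p q : ℤ} (hpq : IsCoprime p q) :
    a ^ 2 * p ^ (a + b) + (a + b) ^ 2 * p ^ a * q ^ b + b ^ 2 * q ^ (a + b) ≠ 0 := by
  intro h
  obtain ⟨c, hc⟩ := ha.add_odd hb
  have hc0 : c ≠ 0 := by
    have := ha.pos
    omega
  have h4 : ((p : ZMod 4) ^ 2) ^ c + ((q : ZMod 4) ^ 2) ^ c = 0 := by
    have h4 := congrArg (Int.cast : ℤ → ZMod 4) h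
    push_cast at h4
    rw [natCast_sq_zmod_four_eq_one_of_odd ha, natCast_sq_zmod_four_eq_one_of_odd hb,
      ← Nat.cast_add, natCast_sq_zmod_four_eq_zero_of_even (ha.add_odd hb), hc] at h4
    rw [← pow_mul, ← pow_mul, two_mul]
    linear_combination h4
  have hidem (x : ZMod 4) : IsIdempotentElem (x ^ 2) := by
    change x ^ 2 * x ^ 2 = x ^ 2
    revert x
    decide
  rw [(hidem _).pow_eq hc0, (hidem _).pow_eq hc0] at h4
  have hsq : ∀ x y : ZMod 4, x ^ 2 + y ^ 2 = 0 → x ^ 2 = 0 ∧ y ^ 2 = 0 := by decide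
  obtain ⟨hp, hq⟩ := hsq _ _ h4
  have h2 := hpq.isUnit_of_dvd' (Int.two_dvd_of_cast_sq_zmod_four_eq_zero hp)
    (Int.two_dvd_of_cast_sq_zmod_four_eq_zero hq)
  norm_num [Int.isUnit_iff] at h2

theorem sq_mul_pow_add_sq_mul_pow_add_sq_ne_zero {a b : ℕ} (ha : Odd a) (hb : Odd b) (w : ℚ) :
    (a : ℚ) ^ 2 * w ^ (a + b) + (a + b) ^ 2 * w ^ a + b ^ 2 ≠ 0 := by
  intro h
  apply Int.sq_mul_pow_add_sq_mul_pow_mul_pow_add_sq_mul_pow_ne_zero ha hb w.isCoprime_num_den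
  have hden : (w.den : ℚ) ≠ 0 := by positivity
  have key : (a : ℚ) ^ 2 * w.num ^ (a + b) + (a + b) ^ 2 * w.num ^ a * w.den ^ b
      + b ^ 2 * w.den ^ (a + b) = (w.den : ℚ) ^ (a + b) * ((a : ℚ) ^ 2 * (w.num / w.den) ^ (a + b)
        + (a + b) ^ 2 * (w.num / w.den) ^ a + b ^ 2) := by
    rw [div_pow, div_pow, pow_add (w.den : ℚ)]
    field_simp
  rw [Rat.num_div_den, h, mul_zero] at key
  exact_mod_cast key

theorem Subfield.pow_gcd_mem {K : Type*} [DivisionRing K] (F : Subfield K) {z : K} {a b : ℕ}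
    (ha : z ^ a ∈ F) (hb : z ^ b ∈ F) : z ^ a.gcd b ∈ F := by
  rcases eq_or_ne z 0 with rfl | hz
  · rw [zero_pow_eq]
    split_ifs
    · exact F.one_mem
    · exact F.zero_mem
  rw [← zpow_natCast, Nat.gcd_eq_gcd_ab, zpow_add₀ hz, zpow_mul, zpow_mul, zpow_natCast,
    zpow_natCast]
  exact F.mul_mem (F.zpow_mem ha _) (F.zpow_mem hb _)

theorem odd_of_pow_neg {R : Type*} [Ring R] [LinearOrder R] [IsStrictOrderedRing R] {x : R}
    {n : ℕ} (h : x ^ n < 0) : Odd n := by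
  by_contra hn
  exact not_lt.2 ((Nat.not_odd_iff_even.1 hn).pow_nonneg x) h

theorem sq_mul_pow_add_sq_mul_pow_add_sq_ne_zero_of_pow_eq_ratCast {K : Type*} [Field K]
    [CharZero K] {A B : ℕ} {z : K} {r s : ℚ} (hr : r < 0) (hs : s < 0) (hzA : z ^ A = r)
    (hzB : z ^ B = s) : (A : K) ^ 2 * z ^ (A + B) + (A + B) ^ 2 * z ^ A + B ^ 2 ≠ 0 := by
  have hA : A ≠ 0 := by
    rintro rfl
    have : (r : K) = 1 := by rw [← hzA, pow_zero]
    norm_cast at this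
    linarith
  obtain ⟨w, hw⟩ : ∃ w : ℚ, (w : K) = z ^ A.gcd B :=
    (Rat.castHom K).fieldRange.pow_gcd_mem ⟨r, hzA.symm⟩ ⟨s, hzB.symm⟩
  obtain ⟨A', hA'⟩ := Nat.gcd_dvd_left A B
  obtain ⟨B', hB'⟩ := Nat.gcd_dvd_right A B
  set d := A.gcd B
  have hwA : w ^ A' = r := Rat.cast_injective (by push_cast; rw [hw, ← pow_mul, ← hA', hzA])
  have hwB : w ^ B' = s := Rat.cast_injective (by push_cast; rw [hw, ← pow_mul, ← hB', hzB])
  have hd : (d : K) ≠ 0 := Nat.cast_ne_zero.2 (Nat.gcd_ne_zero_left hA)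
  intro h
  apply sq_mul_pow_add_sq_mul_pow_add_sq_ne_zero (odd_of_pow_neg (hwA ▸ hr))
    (odd_of_pow_neg (hwB ▸ hs)) w
  apply Rat.cast_injective (α := K)
  apply mul_left_cancel₀ (pow_ne_zero 2 hd)
  rw [hA', hB'] at h
  push_cast at h ⊢
  rw [hw, mul_zero, ← h]
  ring

theorem not_power_sums_eq_zero {K : Type*} [Field K] [CharZero K] {z : K} (hz : z ≠ 0)
    {n m k : ℕ} (hmn : m < n) (hkm : k < m) (hk : 0 < k) :
    ¬ (n * z ^ n + m * z ^ m + k * z ^ k = 0 ∧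
      n ^ 2 * z ^ n + m ^ 2 * z ^ m + k ^ 2 * z ^ k = 0) := by
  rintro ⟨hS1, hS2⟩
  obtain ⟨B, rfl⟩ : ∃ B, m = k + B := ⟨m - k, by omega⟩
  obtain ⟨A, rfl⟩ : ∃ A, n = k + B + A := ⟨n - (k + B), by omega⟩
  have hEA := mul_sub_mul_pow_add_mul_sub_eq_zero hz hS1 hS2
  have hEB := mul_sub_mul_pow_add_mul_sub_eq_zero (x := ((k + B : ℕ) : K)) (y := (k : K))
    (t := ((k + B + A : ℕ) : K)) (i := B) (j := k) (l := k + B + A) hz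
    (by linear_combination hS1) (by linear_combination hS2)
  push_cast at hEA hEB
  have hA : (0 : ℚ) < A := by exact_mod_cast (by omega : 0 < A)
  have hB : (0 : ℚ) < B := by exact_mod_cast (by omega : 0 < B)
  have hk' : (0 : ℚ) < k := by exact_mod_cast hk
  have hdenA : (0 : ℚ) < (k + B + A) * (A + B) := by nlinarith
  have hdenB : (0 : ℚ) < (k + B) * A := by nlinarith
  have hzA : z ^ A = ((-((k + B) * B) / ((k + B + A) * (A + B)) : ℚ) : K) := by
    rw [Rat.cast_div, eq_div_iff (Rat.cast_ne_zero.2 hdenA.ne')]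
    push_cast
    linear_combination hEA
  have hzB : z ^ B = ((-(k * (A + B)) / ((k + B) * A) : ℚ) : K) := by
    rw [Rat.cast_div, eq_div_iff (Rat.cast_ne_zero.2 hdenB.ne')]
    push_cast
    linear_combination -hEB
  refine sq_mul_pow_add_sq_mul_pow_add_sq_ne_zero_of_pow_eq_ratCast
    (div_neg_of_neg_of_pos (by nlinarith) hdenA) (div_neg_of_neg_of_pos (by nlinarith) hdenB)
    hzA hzB ?_
  have h : (A : ℚ) ^ 2 * ((-((k + B) * B) / ((k + B + A) * (A + B))) *
      (-(k * (A + B)) / ((k + B) * A))) + (A + B) ^ 2 * (-((k + B) * B) / ((k + B + A) * (A + B)))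
      + B ^ 2 = 0 := by
    field_simp
    ring
  rw [pow_add, hzA, hzB]
  exact_mod_cast h

theorem no_triple_root (a : ℚ) (ha : a ≠ 0) (n m k : ℕ) (h1 : n > m) (h2 : m > k)
    (h3 : k ≥ 1) (z : ℂ) :
    rootMultiplicity z
      (((X : ℚ[X])^n + X^m + X^k + C a).map (algebraMap ℚ ℂ)) < 3 := by
  by_contra! hz3
  have hP : ((X : ℚ[X])^n + X^m + X^k + C a).map (algebraMap ℚ ℂ) =
      X ^ n + X ^ m + X ^ k + C (a : ℂ) := by simp
  rw [hP] at hz3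
  obtain ⟨hS0, hS⟩ := power_sums_eq_zero_of_two_lt_rootMultiplicity hz3
  have hz : z ≠ 0 := by
    rintro rfl
    simp [zero_pow (by omega : n ≠ 0), zero_pow (by omega : m ≠ 0), zero_pow (by omega : k ≠ 0),
      ha] at hS0
  exact not_power_sums_eq_zero hz h1 h2 h3 hS
end
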